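/- arXiv:1705.08676 — 2 statements merged into one kernel-verified Lean document; each statement's English description precedes it below -/
import Mathlib

section
/- For words u < w in subword order, μ(u,w) = (−1)^{|w|−|u|} · E(u,w) + Σ_{λ : u ≤ λ < w} μ(u,λ) · μ(0̂,1̂), where the second factor in each summand is the Möbius function of the bounded poset Â*(λ,w), and the sum is over all words λ with u ≤ λ ≤ w and λ ≠ w. -/
/-!
Every upper interval `[S, 1̂]` of `Â*(λ,w)` is the boolean interval from `S` to the full position
set (with `1̂` in the role of the full set), so `μ(S,1̂) = (-1)^{|w|-|S|}` and
`μ(0̂,1̂) = -1 - ∑_{S ∈ A*(λ,w)} (-1)^{|w|-|S|}`. Substituting this, the terms `-μ(u,λ)` add up to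
`μ(u,w)` by the defining recurrence. In the remaining double sum, exchange the order: for a proper
position set `S` the inner sum runs over `u ≤ λ ≤ w|_S` and is the Kronecker delta `[w|_S = u]`,
so what survives is `(-1)^{|w|-|u|}` times the number of embeddings of `u` in `w`.
-/

attribute [local instance] Classical.propDecidable

noncomputable instance {α : Type*} [Fintype α] : Fintype (WithBot α) :=
  inferInstanceAs (Fintype (Option α))
noncomputable instance {α : Type*} [Fintype α] : Fintype (WithTop α) :=
  inferInstanceAs (Fintype (Option α))

/-- The Möbius function of a finite partial order. -/
noncomputable def mob {α : Type*} [Preorder α] [Fintype α] (a b : α) : ℤ :=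
  letI := Classical.decEq α
  letI : @DecidableRel α α (· ≤ ·) := Classical.decRel _
  letI : @DecidableRel α α (· < ·) := Classical.decRel _
  letI : LocallyFiniteOrder α := Fintype.toLocallyFiniteOrder
  IncidenceAlgebra.mu ℤ a b

/-- The bounded poset obtained by adjoining a new minimum `0̂` and maximum `1̂`. -/
abbrev Bd (α : Type*) := WithBot (WithTop α)

/-- The Möbius number `μ(0̂,1̂)` of the bounded poset obtained from a finite poset by
adjoining a new minimum and maximum. -/
noncomputable def mobHat (α : Type*) [Preorder α] [Fintype α] : ℤ :=
  mob (⊥ : Bd α) ⊤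

/-- The subsequence of the word `w` indexed by the set of positions `S`,
taken in increasing position order. -/
def subIdx {A : Type*} (w : List A) (S : Finset (Fin w.length)) : List A :=
  (S.sort (· ≤ ·)).map (w.get ·)

/-- `E u w`: the number of embeddings of `u` in `w`, i.e. of sets of positions of `w`
whose indexed subsequence is `u`. -/
noncomputable def wordE {A : Type*} (u w : List A) : ℕ :=
  (Finset.univ.filter fun S : Finset (Fin w.length) => subIdx w S = u).card

/-- The poset `A*(λ,w)`: all proper subsets `S ⊊ {1,…,|w|}` of positions such that `λ`
is a subsequence of the word `w|_S`, ordered by inclusion. -/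
abbrev AstarW {A : Type*} (w lam : List A) :=
  {S : Finset (Fin w.length) // S ≠ Finset.univ ∧ lam.Sublist (subIdx w S)}

open Finset

section Mobius

variable {α : Type*} [PartialOrder α] [Fintype α]

lemma mob_self (a : α) : mob a a = 1 := by
  unfold mob
  let : LocallyFiniteOrder α := Fintype.toLocallyFiniteOrder
  exact IncidenceAlgebra.mu_self a

lemma mob_eq_neg_sum_of_ne {a b : α} (hab : a ≠ b) :
    mob a b = -∑ x ∈ univ.filter (fun x => a < x ∧ x ≤ b), mob x b := by
  unfold mob
  let : LocallyFiniteOrder α := Fintype.toLocallyFiniteOrder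
  rw [IncidenceAlgebra.mu_eq_neg_sum_Ioc_of_ne hab]
  congr 2
  ext x
  simp

end Mobius

section Bounded

lemma sum_bd {P M : Type*} [Fintype P] [AddCommMonoid M] (f : Bd P → M) :
    ∑ x, f x = f ⊥ + f ⊤ + ∑ a : P, f ((a : WithTop P) : Bd P) := by
  rw [add_assoc]
  exact (Fintype.sum_option _).trans (congrArg _ (Fintype.sum_option _))

variable {P : Type*} [PartialOrder P] [Fintype P]

lemma mob_coe_top (g : P → ℤ) (hg : ∀ a, g a = -1 - ∑ x ∈ univ.filter (a < ·), g x) (a : P) :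
    mob ((a : WithTop P) : Bd P) ⊤ = g a := by
  induction a using WellFoundedGT.induction with
  | _ a ih =>
  rw [mob_eq_neg_sum_of_ne (by simp), sum_filter, sum_bd, hg a]
  have hlt : ((a : WithTop P) : Bd P) < ⊤ := WithBot.coe_lt_coe.2 (WithTop.coe_lt_top a)
  simp only [not_lt_bot, if_false, hlt, le_refl, le_top, and_self, and_true, if_true,
    WithBot.coe_lt_coe, WithTop.coe_lt_coe, mob_self, zero_add]
  rw [← sum_filter, sum_congr rfl fun y hy => ih y (mem_filter.1 hy).2]
  ring

lemma mobHat_eq_neg_one_sub_sum : mobHat P = -1 - ∑ a : P, mob ((a : WithTop P) : Bd P) ⊤ := by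
  rw [mobHat, mob_eq_neg_sum_of_ne bot_ne_top, sum_filter, sum_bd]
  simp [mob_self]
  ring

end Bounded

section UpClosed

variable {α : Type*} [Fintype α]

lemma sum_superset_neg_one_pow_eq_zero {S : Finset α} (hS : S ≠ univ) :
    ∑ T ∈ univ.filter (S ⊆ ·), (-1 : ℤ) ^ (Fintype.card α - #T) = 0 := by
  have hSc : Sᶜ.Nonempty := by simpa [nonempty_iff_ne_empty] using hS
  rw [← sum_powerset_neg_one_pow_card_of_nonempty hSc]
  refine sum_nbij' compl compl (fun T hT => ?_) (fun U hU => ?_) (fun T _ => compl_compl T)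
    (fun U _ => compl_compl U) (fun T _ => by rw [card_compl])
  · simpa using compl_subset_compl.2 (mem_filter.1 hT).2
  · simpa using compl_subset_compl.2 (mem_powerset.1 hU)

lemma sum_ssuperset_proper_neg_one_pow {S : Finset α} (hS : S ≠ univ) :
    ∑ T ∈ univ.filter (fun T => S ⊂ T ∧ T ≠ univ), (-1 : ℤ) ^ (Fintype.card α - #T) =
      -1 - (-1 : ℤ) ^ (Fintype.card α - #S) := by
  have hsplit : univ.filter (S ⊆ ·) =
      insert S (insert univ (univ.filter fun T => S ⊂ T ∧ T ≠ univ)) := by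
    ext T
    simp only [mem_filter, mem_univ, true_and, mem_insert]
    constructor
    · intro h
      by_cases hTS : T = S
      · exact Or.inl hTS
      · by_cases hTu : T = univ
        · exact Or.inr (Or.inl hTu)
        · exact Or.inr (Or.inr ⟨ssubset_of_subset_of_ne h (Ne.symm hTS), hTu⟩)
    · rintro (rfl | rfl | ⟨h, -⟩)
      exacts [subset_rfl, subset_univ _, h.subset]
  have h := sum_superset_neg_one_pow_eq_zero hS
  rw [hsplit, sum_insert (by simp [hS]), sum_insert (by simp)] at h
  simp only [card_univ, Nat.sub_self, pow_zero] at h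
  linarith

lemma mobHat_proper_upClosed {p : Finset α → Prop} (hp : Monotone p)
    [Fintype {S : Finset α // S ≠ univ ∧ p S}] :
    mobHat {S : Finset α // S ≠ univ ∧ p S} =
      -1 - ∑ S ∈ univ.filter (fun S => S ≠ univ ∧ p S), (-1 : ℤ) ^ (Fintype.card α - #S) := by
  let g (S : {S : Finset α // S ≠ univ ∧ p S}) : ℤ := (-1) ^ (Fintype.card α - #S.1)
  have hg (S) : g S = -1 - ∑ T ∈ univ.filter (S < ·), g T := by
    have hmap : (univ.filter (S < ·)).map (Function.Embedding.subtype _) =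
        univ.filter (fun T => S.1 ⊂ T ∧ T ≠ univ) := by
      ext T
      simp only [mem_map, mem_filter, mem_univ, true_and, Function.Embedding.subtype_apply]
      exact ⟨fun ⟨T', h, hT'⟩ => hT' ▸ ⟨h, T'.2.1⟩,
        fun ⟨h, hT⟩ => ⟨⟨T, hT, hp h.subset S.2.2⟩, h, rfl⟩⟩
    have h := sum_ssuperset_proper_neg_one_pow S.2.1
    rw [← hmap, sum_map] at h
    simp only [Function.Embedding.subtype_apply] at h
    simp only [g]
    linarith
  -- `convert` reconciles the subtype's `<` with the one of its `PartialOrder` instance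
  rw [mobHat_eq_neg_one_sub_sum,
    sum_congr rfl fun S _ => mob_coe_top g (fun S => by convert hg S) S,
    sum_subtype (p := fun S => S ≠ univ ∧ p S) _ (fun _ => by simp)
      (fun S => (-1 : ℤ) ^ (Fintype.card α - #S))]

end UpClosed

section Words

variable {A : Type*}

lemma subIdx_univ (w : List A) : subIdx w univ = w := by
  simp [subIdx, Fin.sort_univ, List.map_getElem_finRange]

lemma length_subIdx (w : List A) (S : Finset (Fin w.length)) : (subIdx w S).length = #S := by
  simp [subIdx]

lemma subIdx_sublist_subIdx (w : List A) {S T : Finset (Fin w.length)} (h : S ⊆ T) :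
    (subIdx w S).Sublist (subIdx w T) := by
  refine List.Sublist.map _ (List.sublist_of_subperm_of_pairwise ?_ (S.pairwise_sort _)
    (T.pairwise_sort _))
  exact (S.sort_nodup _).subperm fun x hx => by simpa using h (by simpa using hx)

lemma subIdx_sublist (w : List A) (S : Finset (Fin w.length)) : (subIdx w S).Sublist w :=
  by simpa [subIdx_univ] using subIdx_sublist_subIdx w (subset_univ S)

end Words

lemma mobHat_astarW {A : Type*} (w lam : List A) :
    mobHat (AstarW w lam) = -1 - ∑ S ∈ univ.filter (fun S => S ≠ univ ∧ lam.Sublist (subIdx w S)),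
      (-1 : ℤ) ^ (w.length - #S) := by
  rw [mobHat_proper_upClosed fun _ _ h hS => hS.trans (subIdx_sublist_subIdx w h), Fintype.card_fin]
  -- the two sides differ only in the decidability instances of the filter
  congr!

section SubwordMobius

variable {A : Type*} (mu : List A → List A → ℤ) (hmu_self : ∀ u : List A, mu u u = 1)
  (hmu_rec : ∀ u w : List A, u.Sublist w → u ≠ w →
    ∑ c ∈ w.sublists.toFinset.filter (fun c => u.Sublist c), mu u c = 0)
include hmu_self hmu_rec

lemma sum_mu_sublists (u v : List A) :
    ∑ c ∈ v.sublists.toFinset.filter (fun c => u.Sublist c), mu u c = if u = v then 1 else 0 := by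
  split_ifs with huv
  · subst huv
    have : u.sublists.toFinset.filter (fun c => u.Sublist c) = {u} := by
      ext c
      simp only [mem_filter, List.mem_toFinset, List.mem_sublists, mem_singleton]
      exact ⟨fun ⟨h₁, h₂⟩ => h₁.antisymm h₂, fun h => h ▸ ⟨.refl _, .refl _⟩⟩
    rw [this, sum_singleton, hmu_self]
  · by_cases hsub : u.Sublist v
    · exact hmu_rec u v hsub huv
    · refine sum_eq_zero fun c hc => absurd ?_ hsub
      simp only [mem_filter, List.mem_toFinset, List.mem_sublists] at hc
      exact hc.2.trans hc.1

lemma sum_mu_proper_sublists {u w : List A} (huw : u.Sublist w) (hne : u ≠ w) :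
    ∑ lam ∈ w.sublists.toFinset.filter (fun lam => u.Sublist lam ∧ lam ≠ w), mu u lam =
      -mu u w := by
  have h := sum_mu_sublists mu hmu_self hmu_rec u w
  have hw : w ∈ w.sublists.toFinset.filter (fun c => u.Sublist c) := by simp [huw]
  have hset : w.sublists.toFinset.filter (fun lam => u.Sublist lam ∧ lam ≠ w) =
      (w.sublists.toFinset.filter (fun c => u.Sublist c)).erase w := by
    ext lam
    simp only [mem_filter, mem_erase]
    tauto
  rw [if_neg hne, ← add_sum_erase _ _ hw] at h
  rw [hset]
  linarith

lemma sum_mu_sublist_subIdx {u w : List A} {S : Finset (Fin w.length)} (hS : S ≠ univ) :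
    ∑ lam ∈ (w.sublists.toFinset.filter (fun lam => u.Sublist lam ∧ lam ≠ w)).filter
      (fun lam => lam.Sublist (subIdx w S)), mu u lam = if u = subIdx w S then 1 else 0 := by
  rw [← sum_mu_sublists mu hmu_self hmu_rec u (subIdx w S)]
  refine sum_congr ?_ fun _ _ => rfl
  ext lam
  simp only [mem_filter, List.mem_toFinset, List.mem_sublists]
  refine ⟨fun ⟨⟨_, h, _⟩, hS'⟩ => ⟨hS', h⟩,
    fun ⟨hS', h⟩ => ⟨⟨hS'.trans (subIdx_sublist w S), h, ?_⟩, hS'⟩⟩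
  rintro rfl
  have := hS'.length_le
  rw [length_subIdx] at this
  exact hS (eq_univ_of_card S (le_antisymm (card_le_univ S) (by simpa using this)))

lemma sum_mu_mul_sum_astarW {u w : List A} (hne : u ≠ w) :
    ∑ lam ∈ w.sublists.toFinset.filter (fun lam => u.Sublist lam ∧ lam ≠ w),
      ∑ S ∈ univ.filter (fun S => S ≠ univ ∧ lam.Sublist (subIdx w S)),
        mu u lam * (-1) ^ (w.length - #S) = (-1) ^ (w.length - u.length) * (wordE u w : ℤ) := by
  set s := w.sublists.toFinset.filter (fun lam => u.Sublist lam ∧ lam ≠ w)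
  have hproper : univ.filter (fun S : Finset (Fin w.length) => S ≠ univ ∧ u = subIdx w S) =
      univ.filter (fun S => subIdx w S = u) := by
    refine filter_congr fun S _ => ⟨fun h => h.2.symm, fun h => ⟨?_, h.symm⟩⟩
    rintro rfl
    exact hne (h.symm.trans (subIdx_univ w))
  calc _ = ∑ S ∈ univ.filter (· ≠ univ), ∑ lam ∈ s.filter (fun lam => lam.Sublist (subIdx w S)),
        mu u lam * (-1) ^ (w.length - #S) :=
        sum_comm' fun lam S => by simp only [mem_filter, mem_univ, true_and]; tauto
    _ = ∑ S ∈ univ.filter (· ≠ univ),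
        if u = subIdx w S then (-1) ^ (w.length - u.length) else 0 := by
        refine sum_congr rfl fun S hS => ?_
        rw [← sum_mul, sum_mu_sublist_subIdx mu hmu_self hmu_rec (mem_filter.1 hS).2]
        split_ifs with h
        · rw [h, length_subIdx, one_mul]
        · exact zero_mul _
    _ = _ := by
        rw [← sum_filter, filter_filter, hproper, sum_const, nsmul_eq_mul, mul_comm, wordE]

end SubwordMobius

/-- The Möbius function `mu` of subword order is characterised by its defining recurrence. -/
theorem stmt1 {A : Type*} (mu : List A → List A → ℤ)
    (hmu_self : ∀ u : List A, mu u u = 1)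
    (hmu_rec : ∀ u w : List A, u.Sublist w → u ≠ w →
      ∑ c ∈ w.sublists.toFinset.filter (fun c => u.Sublist c), mu u c = 0)
    (u w : List A) (huw : u.Sublist w) (hne : u ≠ w) :
    mu u w = (-1) ^ (w.length - u.length) * (wordE u w : ℤ) +
      ∑ lam ∈ w.sublists.toFinset.filter (fun lam => u.Sublist lam ∧ lam ≠ w),
        mu u lam * mobHat (AstarW w lam) := by
  simp_rw [mobHat_astarW, mul_sub, mul_neg_one, mul_sum, sum_sub_distrib, sum_neg_distrib,
    sum_mu_proper_sublists mu hmu_self hmu_rec huw hne,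
    sum_mu_mul_sum_astarW mu hmu_self hmu_rec hne]
  ring
end

section
/- Let σ < π be permutations in the classical permutation pattern order, with σ of length m and π of length n, n − m ≥ 3, and suppose [σ,π] is strongly zero split via the partition E₁, E₂ of its embedding set. Then the open interval (σ,π) is disconnected with components P_i = {λ : σ < λ < π and λ = red(π|_{Fin n ∖ D}) for some D ⊆ Z(E_i)} for i = 1,2; that is, P₁ and P₂ are disjoint nonempty sets whose union is (σ,π), and every element of P₁ is incomparable with every element of P₂. -/
attribute [local instance] Classical.propDecidable

/-- Classical pattern containment for (reduced) permutations. -/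
def PermLE {m n : ℕ} (σ : Equiv.Perm (Fin m)) (π : Equiv.Perm (Fin n)) : Prop :=
  ∃ f : Fin m → Fin n, StrictMono f ∧ ∀ i j : Fin m, σ i < σ j ↔ π (f i) < π (f j)

/-- Strict classical pattern containment. -/
def PermLT {m n : ℕ} (σ : Equiv.Perm (Fin m)) (π : Equiv.Perm (Fin n)) : Prop :=
  PermLE σ π ∧ ¬ PermLE π σ

/-- `red π S` is the permutation of length `S.card` order-isomorphic to `π`
restricted to the set of positions `S`. -/
noncomputable def red {n : ℕ} (π : Equiv.Perm (Fin n)) (S : Finset (Fin n)) :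
    Equiv.Perm (Fin S.card) := by
  classical
  have hcard : (S.image fun x => π x).card = S.card :=
    Finset.card_image_of_injective _ π.injective
  refine Equiv.ofBijective (fun i =>
    ((S.image fun x => π x).orderIsoOfFin hcard).symm
      ⟨π (S.orderIsoOfFin rfl i), Finset.mem_image_of_mem _ (S.orderIsoOfFin rfl i).2⟩)
    (Finite.injective_iff_bijective.mp ?_)
  intro i j hij
  have h2 := congrArg (fun z => ((((S.image fun x => π x).orderIsoOfFin hcard) z : Fin n)))
    hij
  simp only [OrderIso.apply_symm_apply] at h2
  have h4 := π.injective h2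
  have h5 : (S.orderIsoOfFin rfl) i = (S.orderIsoOfFin rfl) j := Subtype.ext h4
  exact (S.orderIsoOfFin rfl).injective h5

/-- `S` is an embedding (occurrence set) of `σ` in `π`, i.e. `red(π|_S) = σ`. -/
def IsEmb {n m : ℕ} (π : Equiv.Perm (Fin n)) (S : Finset (Fin n))
    (σ : Equiv.Perm (Fin m)) : Prop :=
  ∃ h : S.card = m, ∀ i : Fin S.card, (red π S i : ℕ) = (σ (Fin.cast h i) : ℕ)

/-- `E(σ,π)`: the number of embeddings of `σ` in `π`. -/
noncomputable def permE {m n : ℕ} (σ : Equiv.Perm (Fin m)) (π : Equiv.Perm (Fin n)) : ℕ :=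
  (Finset.univ.filter fun S : Finset (Fin n) => IsEmb π S σ).card

/-- The poset `A*(λ,π)` of proper position sets `S ⊊ Fin n` with `λ ≤ red(π|_S)`,
ordered by inclusion. -/
abbrev AstarP {n k : ℕ} (π : Equiv.Perm (Fin n)) (lam : Equiv.Perm (Fin k)) :=
  {S : Finset (Fin n) // S ≠ Finset.univ ∧ PermLE lam (red π S)}

/-- The predecessor position. -/
def predPos {n : ℕ} (p : Fin n) : Fin n :=
  ⟨p.1 - 1, lt_of_le_of_lt (Nat.sub_le p.1 1) p.2⟩

/-- `p` lies in the tail of an adjacency of `π`: `p` is not the first position and the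
values of `π` at `p−1` and `p` differ by exactly one (consecutive positions in a maximal
block on which the values increase by exactly 1 at each step or decrease by exactly 1 at
each step). -/
def tailPos {n : ℕ} (π : Equiv.Perm (Fin n)) (p : Fin n) : Prop :=
  0 < p.1 ∧ ((π p : ℕ) = (π (predPos p) : ℕ) + 1 ∨ (π (predPos p) : ℕ) = (π p : ℕ) + 1)

/-- A normal embedding: an embedding containing every position in the tail of an
adjacency of `π`. -/
def IsNormalEmb {n m : ℕ} (π : Equiv.Perm (Fin n)) (S : Finset (Fin n))
    (σ : Equiv.Perm (Fin m)) : Prop :=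
  IsEmb π S σ ∧ ∀ p : Fin n, tailPos π p → p ∈ S

/-- `NE(σ,π)`: the number of normal embeddings of `σ` in `π`. -/
noncomputable def permNE {m n : ℕ} (σ : Equiv.Perm (Fin m)) (π : Equiv.Perm (Fin n)) : ℕ :=
  (Finset.univ.filter fun S : Finset (Fin n) => IsNormalEmb π S σ).card

/-- A set of positions is representative if within every adjacency of `π` its positions
form a suffix of the adjacency. -/
def ReprP {n : ℕ} (π : Equiv.Perm (Fin n)) (S : Finset (Fin n)) : Prop :=
  ∀ p : Fin n, tailPos π p → predPos p ∈ S → p ∈ S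

/-- The poset `R*(λ,π)` of representative proper position sets `S ⊊ Fin n` with
`λ ≤ red(π|_S)`, ordered by inclusion. -/
abbrev RstarP {n k : ℕ} (π : Equiv.Perm (Fin n)) (lam : Equiv.Perm (Fin k)) :=
  {S : Finset (Fin n) // S ≠ Finset.univ ∧ ReprP π S ∧ PermLE lam (red π S)}

/-- The type of all (reduced) permutations of arbitrary lengths. -/
def AllPerm : Type := Σ k : ℕ, Equiv.Perm (Fin k)

/-- Pattern containment on `AllPerm`. -/
def APle (a b : AllPerm) : Prop := PermLE a.2 b.2

/-- Strict pattern containment on `AllPerm`. -/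
def APlt (a b : AllPerm) : Prop := APle a b ∧ ¬ APle b a

/-- A subset `s` of a set with a binary "less or equal" relation `r` is disconnected if it
splits into two nonempty parts such that every pair of elements from separate parts is
incomparable. -/
def DisconnRel {α : Type*} (r : α → α → Prop) (s : Set α) : Prop :=
  ∃ A B : Set α, A.Nonempty ∧ B.Nonempty ∧ A ∪ B = s ∧ A ∩ B = ∅ ∧
    ∀ a ∈ A, ∀ b ∈ B, ¬ r a b ∧ ¬ r b a

/-- The set of embeddings of `σ` in `π`. -/
def EmbSet {m n : ℕ} (σ : Equiv.Perm (Fin m)) (π : Equiv.Perm (Fin n)) :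
    Set (Finset (Fin n)) := {S | IsEmb π S σ}

/-- The union of the zero sets (complements) of a collection of embeddings. -/
def ZSet {n : ℕ} (E : Set (Finset (Fin n))) : Set (Fin n) :=
  ⋃ S ∈ E, (↑(Sᶜ) : Set (Fin n))

/-- `E₁, E₂` is a zero split partition of the embeddings of `σ` in `π`. -/
def ZeroSplitPartition {m n : ℕ} (σ : Equiv.Perm (Fin m)) (π : Equiv.Perm (Fin n))
    (E₁ E₂ : Set (Finset (Fin n))) : Prop :=
  E₁.Nonempty ∧ E₂.Nonempty ∧ E₁ ∪ E₂ = EmbSet σ π ∧ E₁ ∩ E₂ = ∅ ∧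
    ZSet E₁ ∩ ZSet E₂ = ∅

/-- The interval `[σ,π]` is zero split. -/
def ZeroSplit {m n : ℕ} (σ : Equiv.Perm (Fin m)) (π : Equiv.Perm (Fin n)) : Prop :=
  ∃ E₁ E₂ : Set (Finset (Fin n)), ZeroSplitPartition σ π E₁ E₂

/-- The strong condition on a zero split partition: no pair of zero positions can be
filled so that the two resulting position sets are embeddings of the same element. -/
def StrongCondition {n : ℕ} (π : Equiv.Perm (Fin n)) (E₁ E₂ : Set (Finset (Fin n))) : Prop :=
  ∀ S₁ ∈ E₁, ∀ S₂ ∈ E₂,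
    ¬ ∃ z₁ ∈ (↑(S₁ᶜ) : Set (Fin n)), ∃ z₂ ∈ (↑(S₂ᶜ) : Set (Fin n)),
      ∃ (k : ℕ) (τ : Equiv.Perm (Fin k)),
        IsEmb π (insert z₁ S₁) τ ∧ IsEmb π (insert z₂ S₂) τ

/-- The interval `[σ,π]` is strongly zero split. -/
def StronglyZeroSplit {m n : ℕ} (σ : Equiv.Perm (Fin m)) (π : Equiv.Perm (Fin n)) : Prop :=
  ∃ E₁ E₂ : Set (Finset (Fin n)),
    ZeroSplitPartition σ π E₁ E₂ ∧ StrongCondition π E₁ E₂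

/-!
Every `λ` in `(σ, π)` is `red π T` for some `T ⊋ S` with `S` an embedding of `σ`, so it
lies in `P₁` or `P₂` according to the block of `S`; choosing `T = S ∪ {z}` shows both parts
are nonempty. If `a ∈ P₁` were below `b ∈ P₂`, fix an embedding `U` of `σ` in `a` and a
position `u ∉ U`. Transporting `U ⊆ U ∪ {u}` into `π` through the copy of `a` avoiding
`D₁ ⊆ Z(E₁)`, and through a copy of `a` inside the copy of `b` avoiding `D₂ ⊆ Z(E₂)`,
yields `S₁ ∈ E₁`, `S₂ ∈ E₂` and zeros `z₁, z₂` with `S₁ ∪ {z₁}` and `S₂ ∪ {z₂}` embeddings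
of the same permutation, against the strong condition. That `Sᵢ ∈ Eᵢ` holds because `Sᵢ`
misses the nonempty set `Dᵢ ⊆ Z(Eᵢ)`, which is disjoint from `Z(E₃₋ᵢ)`.
-/

theorem Equiv.Perm.eq_of_lt_iff_lt {α : Type*} [LinearOrder α] [Finite α]
    {f g : Equiv.Perm α} (h : ∀ i j, f i < f j ↔ g i < g j) : f = g := by
  have hmono : StrictMono (f ∘ g.symm) := fun a b hab => by
    simpa [h] using hab
  ext x
  simpa using congrFun hmono.eq_id (g x)

section PatternEmbedding

open Finset

variable {k l m n : ℕ}

theorem red_lt_red_iff (π : Equiv.Perm (Fin n)) (S : Finset (Fin n)) (i j : Fin S.card) :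
    red π S i < red π S j ↔ π (S.orderEmbOfFin rfl i) < π (S.orderEmbOfFin rfl j) := by
  have hcard : (S.image fun x => π x).card = S.card :=
    card_image_of_injective _ π.injective
  unfold red
  simp only [Equiv.ofBijective_apply]
  rw [← OrderIso.lt_iff_lt ((S.image fun x => π x).orderIsoOfFin hcard)]
  simp [OrderIso.apply_symm_apply, Subtype.mk_lt_mk, coe_orderIsoOfFin_apply]

theorem isEmb_red (π : Equiv.Perm (Fin n)) (T : Finset (Fin n)) : IsEmb π T (red π T) :=
  ⟨rfl, fun _ => rfl⟩

theorem isEmb_iff_of_strictMono {π : Equiv.Perm (Fin n)} {T : Finset (Fin n)}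
    {lam : Equiv.Perm (Fin k)} {e : Fin k → Fin n} (he : StrictMono e) (hT : T.card = k)
    (hmem : ∀ i, e i ∈ T) :
    IsEmb π T lam ↔ ∀ i j, lam i < lam j ↔ π (e i) < π (e j) := by
  subst hT
  obtain rfl : e = T.orderEmbOfFin rfl := orderEmbOfFin_unique rfl hmem he
  have hred : IsEmb π T lam ↔ red π T = lam := by
    constructor
    · rintro ⟨_, hv⟩
      ext i
      simpa using hv i
    · rintro rfl
      exact isEmb_red π T
  rw [hred]
  constructor
  · rintro rfl i j
    exact red_lt_red_iff π T i j
  · intro h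
    exact Equiv.Perm.eq_of_lt_iff_lt fun i j => (red_lt_red_iff π T i j).trans (h i j).symm

theorem IsEmb.lt_iff_lt {π : Equiv.Perm (Fin n)} {T : Finset (Fin n)} {lam : Equiv.Perm (Fin k)}
    (hT : IsEmb π T lam) (i j : Fin k) :
    lam i < lam j ↔ π (T.orderEmbOfFin hT.fst i) < π (T.orderEmbOfFin hT.fst j) :=
  (isEmb_iff_of_strictMono (T.orderEmbOfFin hT.fst).strictMono hT.fst
    (T.orderEmbOfFin_mem hT.fst)).1 hT i j

theorem permLE_iff_exists_isEmb (τ : Equiv.Perm (Fin m)) (π : Equiv.Perm (Fin n)) :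
    PermLE τ π ↔ ∃ T : Finset (Fin n), IsEmb π T τ := by
  constructor
  · rintro ⟨f, hf, hlt⟩
    refine ⟨univ.image f, (isEmb_iff_of_strictMono hf ?_ fun i => mem_image_of_mem f
      (mem_univ i)).2 hlt⟩
    rw [card_image_of_injective _ hf.injective, card_fin]
  · rintro ⟨T, hT⟩
    exact ⟨T.orderEmbOfFin hT.fst, (T.orderEmbOfFin hT.fst).strictMono, hT.lt_iff_lt⟩

theorem PermLE.card_le {τ : Equiv.Perm (Fin m)} {π : Equiv.Perm (Fin n)} (h : PermLE τ π) :
    m ≤ n :=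
  let ⟨f, hf, _⟩ := h
  Fin.le_of_injective f hf.injective

theorem IsEmb.compl_nonempty {π : Equiv.Perm (Fin n)} {S : Finset (Fin n)}
    {τ : Equiv.Perm (Fin k)} (hS : IsEmb π S τ) (hπτ : ¬ PermLE π τ) : Sᶜ.Nonempty := by
  rw [nonempty_iff_ne_empty, Ne, compl_eq_empty_iff]
  rintro rfl
  obtain rfl : n = k := by simpa using hS.fst
  exact hπτ ⟨id, strictMono_id, fun i j =>
    ((isEmb_iff_of_strictMono strictMono_id hS.fst fun i => mem_univ i).1 hS i j).symm⟩

theorem IsEmb.permLE_red_of_subset {π : Equiv.Perm (Fin n)} {S T : Finset (Fin n)}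
    {τ : Equiv.Perm (Fin m)} (hS : IsEmb π S τ) (hST : S ⊆ T) : PermLE τ (red π T) := by
  let e := S.orderEmbOfFin hS.fst
  let f : Fin m → Fin T.card := fun i =>
    (T.orderIsoOfFin rfl).symm ⟨e i, hST (S.orderEmbOfFin_mem hS.fst i)⟩
  have hf : ∀ i, T.orderEmbOfFin rfl (f i) = e i := fun i => by
    rw [← coe_orderIsoOfFin_apply, OrderIso.apply_symm_apply]
  refine ⟨f, fun a b hab => (T.orderIsoOfFin rfl).symm.strictMono ?_, fun i j => ?_⟩
  · exact Subtype.mk_lt_mk.2 (e.strictMono hab)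
  · rw [red_lt_red_iff, hf, hf]
    exact hS.lt_iff_lt i j

theorem IsEmb.image_orderEmbOfFin {π : Equiv.Perm (Fin n)} {T : Finset (Fin n)}
    {lam : Equiv.Perm (Fin k)} {U : Finset (Fin k)} {τ : Equiv.Perm (Fin m)}
    (hT : IsEmb π T lam) (hU : IsEmb lam U τ) :
    IsEmb π (U.image (T.orderEmbOfFin hT.fst)) τ := by
  let e := T.orderEmbOfFin hT.fst
  let f := U.orderEmbOfFin hU.fst
  have hcard : (U.image e).card = m := by
    rw [card_image_of_injective _ e.injective, hU.fst]
  refine (isEmb_iff_of_strictMono (e.strictMono.comp f.strictMono) hcard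
    fun i => mem_image_of_mem e (U.orderEmbOfFin_mem hU.fst i)).2 fun i j => ?_
  exact (hU.lt_iff_lt i j).trans (hT.lt_iff_lt (f i) (f j))

theorem IsEmb.exists_subset_isEmb {π : Equiv.Perm (Fin n)} {T : Finset (Fin n)}
    {lam : Equiv.Perm (Fin k)} {τ : Equiv.Perm (Fin m)} (hT : IsEmb π T lam)
    (hτ : PermLE τ lam) : ∃ S ⊆ T, IsEmb π S τ := by
  obtain ⟨U, hU⟩ := (permLE_iff_exists_isEmb τ lam).1 hτ
  exact ⟨_, image_subset_iff.2 fun i _ => T.orderEmbOfFin_mem hT.fst i,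
    hT.image_orderEmbOfFin hU⟩

theorem IsEmb.exists_subset_isEmb_insert {π : Equiv.Perm (Fin n)} {T : Finset (Fin n)}
    {lam : Equiv.Perm (Fin k)} {U : Finset (Fin k)} {u : Fin k} {τ : Equiv.Perm (Fin m)}
    {ρ : Equiv.Perm (Fin l)} (hT : IsEmb π T lam) (hU : IsEmb lam U τ) (hu : u ∉ U)
    (hV : IsEmb lam (insert u U) ρ) :
    ∃ S ⊆ T, ∃ z ∉ S, IsEmb π S τ ∧ IsEmb π (insert z S) ρ := by
  let e := T.orderEmbOfFin hT.fst
  refine ⟨U.image e, image_subset_iff.2 fun i _ => T.orderEmbOfFin_mem hT.fst i, e u,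
    fun h => hu ?_, hT.image_orderEmbOfFin hU, ?_⟩
  · obtain ⟨v, hv, hvu⟩ := mem_image.1 h
    exact e.injective hvu ▸ hv
  · rw [← image_insert]
    exact hT.image_orderEmbOfFin hV

end PatternEmbedding

section ZeroSplit

variable {m n : ℕ} {σ : Equiv.Perm (Fin m)} {π : Equiv.Perm (Fin n)}
  {E₁ E₂ : Set (Finset (Fin n))}

theorem coe_compl_subset_zSet {E : Set (Finset (Fin n))} {S : Finset (Fin n)} (hS : S ∈ E) :
    (↑Sᶜ : Set (Fin n)) ⊆ ZSet E :=
  Set.subset_biUnion_of_mem (u := fun S : Finset (Fin n) => (↑Sᶜ : Set (Fin n))) hS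

theorem ZeroSplitPartition.symm (h : ZeroSplitPartition σ π E₁ E₂) :
    ZeroSplitPartition σ π E₂ E₁ :=
  let ⟨h₁, h₂, hU, hI, hZ⟩ := h
  ⟨h₂, h₁, Set.union_comm E₁ E₂ ▸ hU, Set.inter_comm E₁ E₂ ▸ hI,
    Set.inter_comm (ZSet E₁) _ ▸ hZ⟩

theorem StrongCondition.symm (h : StrongCondition π E₁ E₂) : StrongCondition π E₂ E₁ := by
  rintro S₂ hS₂ S₁ hS₁ ⟨z₂, hz₂, z₁, hz₁, k, τ, h₂, h₁⟩
  exact h S₁ hS₁ S₂ hS₂ ⟨z₁, hz₁, z₂, hz₂, k, τ, h₁, h₂⟩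

theorem ZeroSplitPartition.isEmb_of_mem_left (h : ZeroSplitPartition σ π E₁ E₂)
    {S : Finset (Fin n)} (hS : S ∈ E₁) : IsEmb π S σ := by
  have : S ∈ E₁ ∪ E₂ := Or.inl hS
  rwa [h.2.2.1] at this

theorem ZeroSplitPartition.mem_left_of_subset_compl (h : ZeroSplitPartition σ π E₁ E₂)
    {D S : Finset (Fin n)} (hD : (↑D : Set (Fin n)) ⊆ ZSet E₁) (hDne : D.Nonempty)
    (hS : IsEmb π S σ) (hSD : S ⊆ Dᶜ) : S ∈ E₁ := by
  have hmem : S ∈ E₁ ∪ E₂ := by rwa [h.2.2.1]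
  refine hmem.resolve_right fun hS₂ => ?_
  obtain ⟨d, hd⟩ := hDne
  have hdS : d ∈ (↑Sᶜ : Set (Fin n)) := by
    simpa using fun hdS => Finset.mem_compl.1 (hSD hdS) hd
  exact (Set.eq_empty_iff_forall_notMem.1 h.2.2.2.2) d ⟨hD hd, coe_compl_subset_zSet hS₂ hdS⟩

/-- The paper's `P_i` is `zeroComponent σ π E_i`. -/
def zeroComponent (σ : Equiv.Perm (Fin m)) (π : Equiv.Perm (Fin n)) (E : Set (Finset (Fin n))) :
    Set AllPerm :=
  {x | APlt ⟨m, σ⟩ x ∧ APlt x ⟨n, π⟩ ∧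
    ∃ D : Finset (Fin n), (↑D : Set (Fin n)) ⊆ ZSet E ∧ IsEmb π Dᶜ x.2}

theorem ZeroSplitPartition.zeroComponent_nonempty (h : ZeroSplitPartition σ π E₁ E₂)
    (hmn : m + 2 ≤ n) : (zeroComponent σ π E₁).Nonempty := by
  obtain ⟨S, hSE⟩ := h.1
  have hS := h.isEmb_of_mem_left hSE
  obtain ⟨z, hz⟩ : Sᶜ.Nonempty := by
    rw [← Finset.card_pos, Finset.card_compl, hS.fst, Fintype.card_fin]
    omega
  have hT : (insert z S).card = m + 1 := by
    rw [Finset.card_insert_of_notMem (Finset.mem_compl.1 hz), hS.fst]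
  have hTπ : PermLE (red π (insert z S)) π :=
    (permLE_iff_exists_isEmb _ π).2 ⟨_, isEmb_red π _⟩
  refine ⟨⟨_, red π (insert z S)⟩, ⟨hS.permLE_red_of_subset (Finset.subset_insert z S),
    fun hle => ?_⟩, ⟨hTπ, fun hle => ?_⟩, (insert z S)ᶜ, ?_, ?_⟩
  · have := hle.card_le
    dsimp only at this
    omega
  · have := hle.card_le
    dsimp only at this
    omega
  · exact (Finset.coe_subset.2 (Finset.compl_subset_compl.2 (Finset.subset_insert z S))).trans
      (coe_compl_subset_zSet hSE)
  · rw [compl_compl]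
    exact isEmb_red π _

theorem ZeroSplitPartition.zeroComponent_union (h : ZeroSplitPartition σ π E₁ E₂) :
    zeroComponent σ π E₁ ∪ zeroComponent σ π E₂ = {x | APlt ⟨m, σ⟩ x ∧ APlt x ⟨n, π⟩} := by
  ext x
  constructor
  · rintro (⟨hσx, hxπ, -⟩ | ⟨hσx, hxπ, -⟩) <;> exact ⟨hσx, hxπ⟩
  · rintro ⟨hσx, hxπ⟩
    obtain ⟨T, hT⟩ := (permLE_iff_exists_isEmb x.2 π).1 hxπ.1
    obtain ⟨S, hST, hS⟩ := hT.exists_subset_isEmb hσx.1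
    have hTS : (↑Tᶜ : Set (Fin n)) ⊆ ↑Sᶜ := Finset.coe_subset.2 (Finset.compl_subset_compl.2 hST)
    have hTcc : IsEmb π Tᶜᶜ x.2 := by rwa [compl_compl]
    have hmem : S ∈ E₁ ∪ E₂ := by rwa [h.2.2.1]
    rcases hmem with hS₁ | hS₂
    · exact Or.inl ⟨hσx, hxπ, Tᶜ, hTS.trans (coe_compl_subset_zSet hS₁), hTcc⟩
    · exact Or.inr ⟨hσx, hxπ, Tᶜ, hTS.trans (coe_compl_subset_zSet hS₂), hTcc⟩

theorem ZeroSplitPartition.not_apLE_of_mem_zeroComponent (h : ZeroSplitPartition σ π E₁ E₂)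
    (hstrong : StrongCondition π E₁ E₂) {a b : AllPerm} (ha : a ∈ zeroComponent σ π E₁)
    (hb : b ∈ zeroComponent σ π E₂) : ¬ APle a b := by
  intro hab
  obtain ⟨⟨hσa, haσ⟩, ⟨-, hπa⟩, D₁, hD₁, ha⟩ := ha
  obtain ⟨-, ⟨-, hπb⟩, D₂, hD₂, hb⟩ := hb
  obtain ⟨U, hU⟩ := (permLE_iff_exists_isEmb σ a.2).1 hσa
  obtain ⟨u, hu⟩ := hU.compl_nonempty haσ
  have hu : u ∉ U := Finset.mem_compl.1 hu
  have hV := isEmb_red a.2 (insert u U)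
  obtain ⟨S₁, hS₁D, z₁, hz₁, hS₁, hV₁⟩ := ha.exists_subset_isEmb_insert hU hu hV
  obtain ⟨T, hTD, hT⟩ := hb.exists_subset_isEmb hab
  obtain ⟨S₂, hS₂T, z₂, hz₂, hS₂, hV₂⟩ := hT.exists_subset_isEmb_insert hU hu hV
  have hD₁ne : D₁.Nonempty := compl_compl D₁ ▸ ha.compl_nonempty hπa
  have hD₂ne : D₂.Nonempty := compl_compl D₂ ▸ hb.compl_nonempty hπb
  refine hstrong S₁ (h.mem_left_of_subset_compl hD₁ hD₁ne hS₁ hS₁D) S₂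
    (h.symm.mem_left_of_subset_compl hD₂ hD₂ne hS₂ (hS₂T.trans hTD))
    ⟨z₁, by simpa using hz₁, z₂, by simpa using hz₂, _, _, hV₁, hV₂⟩

end ZeroSplit

theorem stmt8_general {m n : ℕ} (σ : Equiv.Perm (Fin m)) (π : Equiv.Perm (Fin n))
    (h3 : 3 ≤ n - m)
    (E₁ E₂ : Set (Finset (Fin n)))
    (hpart : ZeroSplitPartition σ π E₁ E₂) (hstrong : StrongCondition π E₁ E₂) :
    let P₁ : Set AllPerm := {x | APlt ⟨m, σ⟩ x ∧ APlt x ⟨n, π⟩ ∧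
      ∃ D : Finset (Fin n), (↑D : Set (Fin n)) ⊆ ZSet E₁ ∧ IsEmb π Dᶜ x.2}
    let P₂ : Set AllPerm := {x | APlt ⟨m, σ⟩ x ∧ APlt x ⟨n, π⟩ ∧
      ∃ D : Finset (Fin n), (↑D : Set (Fin n)) ⊆ ZSet E₂ ∧ IsEmb π Dᶜ x.2}
    P₁.Nonempty ∧ P₂.Nonempty ∧
      P₁ ∪ P₂ = {x : AllPerm | APlt ⟨m, σ⟩ x ∧ APlt x ⟨n, π⟩} ∧ P₁ ∩ P₂ = ∅ ∧
      ∀ a ∈ P₁, ∀ b ∈ P₂, ¬ APle a b ∧ ¬ APle b a := by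
  intro P₁ P₂
  have hmn : m + 2 ≤ n := by omega
  have hincomp : ∀ a ∈ P₁, ∀ b ∈ P₂, ¬ APle a b ∧ ¬ APle b a := fun a ha b hb =>
    ⟨hpart.not_apLE_of_mem_zeroComponent hstrong ha hb,
      hpart.symm.not_apLE_of_mem_zeroComponent hstrong.symm hb ha⟩
  refine ⟨hpart.zeroComponent_nonempty hmn, hpart.symm.zeroComponent_nonempty hmn,
    hpart.zeroComponent_union, Set.eq_empty_iff_forall_notMem.2 ?_, hincomp⟩
  rintro x ⟨hx₁, hx₂⟩
  exact (hincomp x hx₁ x hx₂).1 ⟨id, strictMono_id, fun _ _ => Iff.rfl⟩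

/-- Suppose `σ < π`, `n − m ≥ 3`, and `[σ,π]` is strongly zero split via
the partition `E₁, E₂` of its embedding set. Then the open interval `(σ,π)` is
disconnected with components
`P_i = {λ | σ < λ < π, λ = red(π|_{Fin n ∖ D}) for some D ⊆ Z(E_i)}`. -/
theorem stmt8 {m n : ℕ} (σ : Equiv.Perm (Fin m)) (π : Equiv.Perm (Fin n))
    (h : PermLT σ π) (h3 : 3 ≤ n - m)
    (E₁ E₂ : Set (Finset (Fin n)))
    (hpart : ZeroSplitPartition σ π E₁ E₂) (hstrong : StrongCondition π E₁ E₂) :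
    let P₁ : Set AllPerm := {x | APlt ⟨m, σ⟩ x ∧ APlt x ⟨n, π⟩ ∧
      ∃ D : Finset (Fin n), (↑D : Set (Fin n)) ⊆ ZSet E₁ ∧ IsEmb π Dᶜ x.2}
    let P₂ : Set AllPerm := {x | APlt ⟨m, σ⟩ x ∧ APlt x ⟨n, π⟩ ∧
      ∃ D : Finset (Fin n), (↑D : Set (Fin n)) ⊆ ZSet E₂ ∧ IsEmb π Dᶜ x.2}
    P₁.Nonempty ∧ P₂.Nonempty ∧
      P₁ ∪ P₂ = {x : AllPerm | APlt ⟨m, σ⟩ x ∧ APlt x ⟨n, π⟩} ∧ P₁ ∩ P₂ = ∅ ∧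
      ∀ a ∈ P₁, ∀ b ∈ P₂, ¬ APle a b ∧ ¬ APle b a :=
  stmt8_general σ π h3 E₁ E₂ hpart hstrong
end
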